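/- arXiv:2101.09636 — 2 statements merged into one kernel-verified Lean document; each statement's English description precedes it below -/
import Mathlib

section
/- For every n ≥ 1, the F-span of {E_i^* 𝟏 : i ∈ [0,d], p^n divides k_i} is invariant under left multiplication by the Terwilliger algebra T. -/
open Matrix

/-- An association scheme of class `d` on a finite set `X`: every pair is assigned a
relation index `r x y ∈ [0,d]`, relation `0` is the diagonal, there is a transpose
involution `inv`, each relation is attained, and the intersection numbers
`p i j ℓ = |{z : (x,z) ∈ R_i, (z,y) ∈ R_j}|` depend only on `ℓ = r x y`. -/
structure AssocScheme (X : Type*) [Fintype X] [DecidableEq X] (d : ℕ) where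
  r : X → X → Fin (d + 1)
  r_diag : ∀ x y : X, r x y = 0 ↔ x = y
  inv : Fin (d + 1) → Fin (d + 1)
  r_symm : ∀ x y : X, r y x = inv (r x y)
  p : Fin (d + 1) → Fin (d + 1) → Fin (d + 1) → ℕ
  card_p : ∀ (i j : Fin (d + 1)) (x y : X),
    (Finset.univ.filter fun z : X => r x z = i ∧ r z y = j).card = p i j (r x y)
  surj : ∀ i : Fin (d + 1), ∃ x y : X, r x y = i

namespace AssocScheme

variable {X : Type*} [Fintype X] [DecidableEq X] {d : ℕ}

/-- The valency `k_i = p_{i i'}^0` of the relation `R_i`. -/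
def k (S : AssocScheme X d) (i : Fin (d + 1)) : ℕ := S.p i (S.inv i) 0

variable (F : Type*) [Field F]

/-- The adjacency matrix of the relation `R_j` over `F`. -/
def adjM (S : AssocScheme X d) (j : Fin (d + 1)) : Matrix X X F :=
  Matrix.of fun y z => if S.r y z = j then 1 else 0

/-- The dual idempotent `E_i^*` with respect to the base point `x`. -/
def dualIdem (S : AssocScheme X d) (x : X) (i : Fin (d + 1)) : Matrix X X F :=
  Matrix.of fun y z => if y = z ∧ S.r x y = i then 1 else 0

/-- The all-one matrix `J`. -/
def Jmat : Matrix X X F := Matrix.of fun _ _ => 1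

/-- The (modular) Terwilliger algebra of `S` with respect to `x`. -/
def terw (S : AssocScheme X d) (x : X) : Subalgebra F (Matrix X X F) :=
  Algebra.adjoin F (Set.range (S.adjM F) ∪ Set.range (S.dualIdem F x))

/-- The primary module `W_0 = span_F {E_i^* 𝟏 : i ∈ [0,d]}`. -/
def W0 (S : AssocScheme X d) (x : X) : Submodule F (X → F) :=
  Submodule.span F (Set.range fun i : Fin (d + 1) => S.dualIdem F x i *ᵥ (1 : X → F))

/-- The span of `{E_i^* 𝟏 : p^n ∣ k_i}`. -/
def Wn (p n : ℕ) (S : AssocScheme X d) (x : X) : Submodule F (X → F) :=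
  Submodule.span F {v : X → F | ∃ i : Fin (d + 1),
    p ^ n ∣ S.k i ∧ v = S.dualIdem F x i *ᵥ (1 : X → F)}

-- AUX

lemma inv_inv' (S : AssocScheme X d) (i : Fin (d + 1)) : S.inv (S.inv i) = i := by
  obtain ⟨a, b, h⟩ := S.surj i
  rw [← h, ← S.r_symm, ← S.r_symm]

lemma r_eq_inv_iff (S : AssocScheme X d) {y z : X} {b : Fin (d + 1)} :
    S.r y z = S.inv b ↔ S.r z y = b := by
  constructor
  · intro h; rw [S.r_symm, h, S.inv_inv']
  · intro h; rw [S.r_symm, h]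

lemma k_card (S : AssocScheme X d) (w : X) (i : Fin (d + 1)) :
    (Finset.univ.filter fun z : X => S.r w z = i).card = S.k i := by
  have h0 : S.r w w = 0 := (S.r_diag w w).mpr rfl
  have hc := S.card_p i (S.inv i) w w
  rw [h0] at hc
  rw [show S.k i = S.p i (S.inv i) 0 from rfl, ← hc]
  congr 1
  ext z
  simp only [Finset.mem_filter, Finset.mem_univ, true_and]
  constructor
  · intro h; exact ⟨h, by rw [S.r_symm, h]⟩
  · rintro ⟨h, _⟩; exact h

lemma key (S : AssocScheme X d) (w : X) (a b i : Fin (d + 1)) :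
    S.k a * S.p i (S.inv b) a = S.k i * S.p a b i := by
  have hL : S.k a * S.p i (S.inv b) a
      = ∑ z : X, ∑ y : X,
          (if S.r w z = a then (if S.r w y = i ∧ S.r z y = b then 1 else 0) else 0) := by
    calc S.k a * S.p i (S.inv b) a
        = ∑ z ∈ Finset.univ.filter (fun z : X => S.r w z = a), S.p i (S.inv b) a := by
          rw [Finset.sum_const, S.k_card w a, smul_eq_mul]
      _ = ∑ z ∈ Finset.univ.filter (fun z : X => S.r w z = a),
            ∑ y : X, (if S.r w y = i ∧ S.r z y = b then 1 else 0) := by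
          apply Finset.sum_congr rfl
          intro z hz
          have hz' : S.r w z = a := by simpa using hz
          rw [← hz', ← S.card_p i (S.inv b) w z, Finset.card_filter]
          apply Finset.sum_congr rfl
          intro y _
          simp only [S.r_eq_inv_iff]
      _ = _ := by
          rw [Finset.sum_filter]
          exact Finset.sum_congr rfl fun z _ => by split <;> simp
  have hR : S.k i * S.p a b i
      = ∑ y : X, ∑ z : X,
          (if S.r w y = i then (if S.r w z = a ∧ S.r z y = b then 1 else 0) else 0) := by
    calc S.k i * S.p a b i
        = ∑ y ∈ Finset.univ.filter (fun y : X => S.r w y = i), S.p a b i := by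
          rw [Finset.sum_const, S.k_card w i, smul_eq_mul]
      _ = ∑ y ∈ Finset.univ.filter (fun y : X => S.r w y = i),
            ∑ z : X, (if S.r w z = a ∧ S.r z y = b then 1 else 0) := by
          apply Finset.sum_congr rfl
          intro y hy
          have hy' : S.r w y = i := by simpa using hy
          rw [← hy', ← S.card_p a b w y, Finset.card_filter]
      _ = _ := by
          rw [Finset.sum_filter]
          exact Finset.sum_congr rfl fun y _ => by split <;> simp
  rw [hL, hR, Finset.sum_comm]
  apply Finset.sum_congr rfl; intro y _
  apply Finset.sum_congr rfl; intro z _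
  by_cases h1 : S.r w z = a <;> by_cases h2 : S.r w y = i <;> simp [h1, h2]

lemma k_pos (S : AssocScheme X d) (i : Fin (d + 1)) : 0 < S.k i := by
  obtain ⟨w, y, h⟩ := S.surj i
  rw [← S.k_card w i, Finset.card_pos]
  exact ⟨y, by simp [h]⟩

lemma coeff_zero (p : ℕ) [Fact p.Prime] [CharP F p] (S : AssocScheme X d) {n : ℕ}
    {a b i : Fin (d + 1)} (hki : p ^ n ∣ S.k i) (hka : ¬ p ^ n ∣ S.k a) :
    ((S.p i (S.inv b) a : F)) = 0 := by
  obtain ⟨w, _, _⟩ := S.surj 0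
  have h := S.key w a b i
  have hdvd : p ^ n ∣ S.k a * S.p i (S.inv b) a := h ▸ hki.mul_right _
  rw [CharP.cast_eq_zero_iff F p]
  by_contra hp
  have hcop : (p ^ n).Coprime (S.p i (S.inv b) a) :=
    Nat.Coprime.pow_left n (((Fact.out : p.Prime).coprime_iff_not_dvd).mpr hp)
  exact hka (hcop.dvd_of_dvd_mul_right hdvd)

lemma dualIdem_mulVec (S : AssocScheme X d) (x : X) (b : Fin (d + 1)) (v : X → F) :
    S.dualIdem F x b *ᵥ v = fun y => if S.r x y = b then v y else 0 := by
  funext y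
  simp [dualIdem, mulVec, dotProduct, ite_and]

lemma dualIdem_mulVec_one (S : AssocScheme X d) (x : X) (i : Fin (d + 1)) :
    S.dualIdem F x i *ᵥ (1 : X → F) = fun y => if S.r x y = i then 1 else 0 := by
  rw [dualIdem_mulVec]; funext y; split <;> simp

lemma adjM_mulVec_gen (S : AssocScheme X d) (x : X) (b i : Fin (d + 1)) :
    S.adjM F b *ᵥ (S.dualIdem F x i *ᵥ (1 : X → F))
      = ∑ a : Fin (d + 1), (S.p i (S.inv b) a : F) • (S.dualIdem F x a *ᵥ (1 : X → F)) := by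
  funext y
  simp only [dualIdem_mulVec_one, Finset.sum_apply, Pi.smul_apply, smul_eq_mul, mul_ite,
    mul_one, mul_zero]
  have hR : (∑ a : Fin (d + 1), if S.r x y = a then (S.p i (S.inv b) a : F) else 0)
      = (S.p i (S.inv b) (S.r x y) : F) := by
    rw [Finset.sum_ite_eq]
    simp
  rw [hR]
  have hL : (S.adjM F b *ᵥ fun y => if S.r x y = i then (1 : F) else 0) y
      = ∑ z : X, (if S.r x z = i ∧ S.r z y = S.inv b then (1 : F) else 0) := by
    simp only [adjM, mulVec, dotProduct, Matrix.of_apply]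
    apply Finset.sum_congr rfl
    intro z _
    have h3 : S.r z y = S.inv b ↔ S.r y z = b := S.r_eq_inv_iff
    by_cases h1 : S.r x z = i <;> by_cases h2 : S.r y z = b <;> simp [h1, h2, h3]
  rw [hL, ← S.card_p i (S.inv b) x y, Finset.card_filter]
  rw [Nat.cast_sum]
  apply Finset.sum_congr rfl
  intro z _
  split <;> simp

theorem Wn_invariant (p : ℕ) [Fact p.Prime] [CharP F p]
    (S : AssocScheme X d) (x : X) :
    ∀ n : ℕ, 1 ≤ n → ∀ Z ∈ S.terw F x, ∀ v ∈ Wn F p n S x, Z *ᵥ v ∈ Wn F p n S x := by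
  intro n _ Z hZ
  induction hZ using Algebra.adjoin_induction with
  | mem Z hZ =>
    intro v hv
    induction hv using Submodule.span_induction with
    | mem v hv =>
      obtain ⟨i, hi, rfl⟩ := hv
      rcases hZ with ⟨b, rfl⟩ | ⟨b, rfl⟩
      · rw [adjM_mulVec_gen]
        apply Submodule.sum_mem
        intro a _
        by_cases ha : p ^ n ∣ S.k a
        · exact Submodule.smul_mem _ _ (Submodule.subset_span ⟨a, ha, rfl⟩)
        · rw [coeff_zero F p S hi ha, zero_smul]
          exact Submodule.zero_mem _
      · by_cases h : b = i
        · subst h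
          have he : S.dualIdem F x b *ᵥ (S.dualIdem F x b *ᵥ (1 : X → F))
              = S.dualIdem F x b *ᵥ (1 : X → F) := by
            rw [dualIdem_mulVec_one, dualIdem_mulVec]
            funext y
            by_cases h1 : S.r x y = b <;> simp [h1]
          rw [he]
          exact Submodule.subset_span ⟨b, hi, rfl⟩
        · have he : S.dualIdem F x b *ᵥ (S.dualIdem F x i *ᵥ (1 : X → F)) = 0 := by
            rw [dualIdem_mulVec_one, dualIdem_mulVec]
            funext y
            by_cases h1 : S.r x y = b <;> simp [h1, h]
          rw [he]
          exact Submodule.zero_mem _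
    | zero => rw [mulVec_zero]; exact Submodule.zero_mem _
    | add u w _ _ hu hw => rw [mulVec_add]; exact Submodule.add_mem _ hu hw
    | smul c u _ hu => rw [mulVec_smul]; exact Submodule.smul_mem _ c hu
  | algebraMap c =>
    intro v hv
    rw [Algebra.algebraMap_eq_smul_one, smul_mulVec, one_mulVec]
    exact Submodule.smul_mem _ c hv
  | add Z₁ Z₂ _ _ h₁ h₂ =>
    intro v hv
    rw [add_mulVec]
    exact Submodule.add_mem _ (h₁ v hv) (h₂ v hv)
  | mul Z₁ Z₂ _ _ h₁ h₂ =>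
    intro v hv
    rw [← mulVec_mulVec]
    exact h₁ _ (h₂ v hv)

end AssocScheme
end

section
/- The product of any three elements of B_1 = span_F{E_i^* J E_j^* : p | k_i k_j} is the zero matrix; consequently B_1 is a nilpotent two-sided ideal of T and B_1 ⊆ Rad(T). -/
open Matrix

namespace AssocScheme

variable {X : Type*} [Fintype X] [DecidableEq X] {d : ℕ}

variable (F : Type*) [Field F]

/-- `B_0 = span_F {E_i^* J E_j^* : i,j ∈ [0,d]}`. -/
def B0 (S : AssocScheme X d) (x : X) : Submodule F (Matrix X X F) :=
  Submodule.span F (Set.range fun q : Fin (d + 1) × Fin (d + 1) =>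
    S.dualIdem F x q.1 * Jmat F * S.dualIdem F x q.2)

/-- `B_1 = span_F {E_i^* J E_j^* : p ∣ k_i k_j}`. -/
def B1 (p : ℕ) (S : AssocScheme X d) (x : X) : Submodule F (Matrix X X F) :=
  Submodule.span F {Z : Matrix X X F | ∃ i j : Fin (d + 1),
    p ∣ S.k i * S.k j ∧ Z = S.dualIdem F x i * Jmat F * S.dualIdem F x j}

set_option linter.unusedSectionVars false

variable {F}
variable (S : AssocScheme X d)

theorem r_self (x : X) : S.r x x = 0 := (S.r_diag x x).2 rfl

theorem inv_invol (i : Fin (d+1)) : S.inv (S.inv i) = i := by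
  obtain ⟨a, b, h⟩ := S.surj i
  have h1 : S.r b a = S.inv i := by rw [S.r_symm, h]
  have h2 : S.r a b = S.inv (S.inv i) := by rw [S.r_symm b a, h1]
  rw [h] at h2; exact h2.symm

theorem card_k (x : X) (i : Fin (d+1)) :
    (Finset.univ.filter fun w : X => S.r x w = i).card = S.k i := by
  have h := S.card_p i (S.inv i) x x
  rw [S.r_self] at h
  rw [show S.k i = S.p i (S.inv i) 0 from rfl, ← h]
  congr 1
  ext z
  simp only [Finset.mem_filter, Finset.mem_univ, true_and]
  exact ⟨fun h => ⟨h, by rw [S.r_symm, h]⟩, fun h => h.1⟩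

theorem count_identity (i j l : Fin (d+1)) :
    S.k l * S.p i j l = S.k i * S.p j (S.inv l) (S.inv i) := by
  obtain ⟨x, -, -⟩ := S.surj 0
  have key : ∀ (w y : X), (S.r x y = l ∧ S.r x w = i ∧ S.r w y = j) ↔
      (S.r x w = i ∧ (S.r w y = j ∧ S.r y x = S.inv l)) := by
    intro w y
    constructor
    · rintro ⟨h1, h2, h3⟩; exact ⟨h2, h3, by rw [S.r_symm, h1]⟩
    · rintro ⟨h2, h3, h1⟩
      refine ⟨?_, h2, h3⟩
      rw [S.r_symm y x, h1, S.inv_invol]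
  have lhs : ∑ y : X, ∑ w : X, (if S.r x y = l ∧ S.r x w = i ∧ S.r w y = j then 1 else 0)
      = S.k l * S.p i j l := by
    have step : ∀ y : X, (∑ w : X, (if S.r x y = l ∧ S.r x w = i ∧ S.r w y = j then (1:ℕ) else 0))
        = if S.r x y = l then S.p i j l else 0 := by
      intro y
      by_cases hy : S.r x y = l
      · simp only [hy, true_and, if_true]
        rw [Finset.sum_boole]
        push_cast [S.card_p i j x y, hy]
        rfl
      · simp [hy]
    rw [Finset.sum_congr rfl fun y _ => step y, ← Finset.sum_filter, Finset.sum_const,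
      S.card_k x l, smul_eq_mul]
  have rhs : ∑ y : X, ∑ w : X, (if S.r x y = l ∧ S.r x w = i ∧ S.r w y = j then 1 else 0)
      = S.k i * S.p j (S.inv l) (S.inv i) := by
    rw [Finset.sum_comm]
    have step : ∀ w : X, (∑ y : X, (if S.r x y = l ∧ S.r x w = i ∧ S.r w y = j then (1:ℕ) else 0))
        = if S.r x w = i then S.p j (S.inv l) (S.inv i) else 0 := by
      intro w
      have : ∀ y : X, (if S.r x y = l ∧ S.r x w = i ∧ S.r w y = j then (1:ℕ) else 0)
          = if S.r x w = i ∧ (S.r w y = j ∧ S.r y x = S.inv l) then 1 else 0 := by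
        intro y; rw [if_congr (key w y) rfl rfl]
      rw [Finset.sum_congr rfl fun y _ => this y]
      by_cases hw : S.r x w = i
      · simp only [hw, true_and, if_true]
        rw [Finset.sum_boole]
        have := S.card_p j (S.inv l) w x
        rw [S.r_symm x w, hw] at this
        push_cast [this]
        rfl
      · simp [hw]
    rw [Finset.sum_congr rfl fun w _ => step w, ← Finset.sum_filter, Finset.sum_const,
      S.card_k x i, smul_eq_mul]
  rw [← lhs, rhs]

variable (F) (x : X)

/-- abbreviation for the generator `E_i^* J E_j^*`. -/
def G (i j : Fin (d+1)) : Matrix X X F := S.dualIdem F x i * Jmat F * S.dualIdem F x j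

theorem G_apply (i j : Fin (d+1)) (y z : X) :
    S.G F x i j y z = if S.r x y = i ∧ S.r x z = j then 1 else 0 := by
  simp only [G, dualIdem, Jmat, Matrix.mul_apply, Matrix.of_apply, mul_one, ite_and,
    mul_ite, mul_zero, Finset.sum_ite_eq, Finset.sum_ite_eq', Finset.mem_univ, if_true]
  split_ifs <;> simp_all

theorem G_mul_G (i j h l : Fin (d+1)) :
    S.G F x i j * S.G F x h l = (if j = h then ((S.k j : F)) else 0) • S.G F x i l := by
  ext y z
  simp only [Matrix.mul_apply, G_apply, Matrix.smul_apply, smul_eq_mul]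
  have step : ∀ w : X, (if S.r x y = i ∧ S.r x w = j then (1:F) else 0) *
      (if S.r x w = h ∧ S.r x z = l then 1 else 0)
      = (if S.r x y = i ∧ S.r x z = l then 1 else 0) *
        (if S.r x w = j ∧ S.r x w = h then 1 else 0) := by
    intro w
    by_cases a1 : S.r x y = i <;> by_cases a2 : S.r x w = j <;>
      by_cases a3 : S.r x w = h <;> by_cases a4 : S.r x z = l <;>
        simp [a1, a2, a3, a4]
  rw [Finset.sum_congr rfl fun w _ => step w, ← Finset.mul_sum]
  by_cases hjh : j = h
  · subst hjh
    simp only [and_self, if_pos rfl]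
    rw [Finset.sum_boole, S.card_k]
    simp
  · have z0 : ∀ w : X, (if S.r x w = j ∧ S.r x w = h then (1:F) else 0) = 0 := by
      intro w
      rw [if_neg]
      rintro ⟨a, b⟩
      exact hjh (a ▸ b ▸ rfl)
    simp [z0, hjh]

theorem E_mul_G (h i j : Fin (d+1)) :
    S.dualIdem F x h * S.G F x i j = if h = i then S.G F x i j else 0 := by
  ext y z
  simp only [Matrix.mul_apply, G_apply, dualIdem, Matrix.of_apply, ite_and, ite_mul, one_mul,
    zero_mul, Finset.sum_ite_eq, Finset.mem_univ, if_true]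
  split_ifs <;> simp_all [G_apply]

theorem G_mul_E (h i j : Fin (d+1)) :
    S.G F x i j * S.dualIdem F x h = if j = h then S.G F x i j else 0 := by
  ext y z
  simp only [Matrix.mul_apply, G_apply, dualIdem, Matrix.of_apply, ite_and, mul_ite, mul_one,
    mul_zero, Finset.sum_ite_eq', Finset.mem_univ, if_true]
  split_ifs <;> simp_all [G_apply]

theorem A_mul_G (m i j : Fin (d+1)) :
    S.adjM F m * S.G F x i j = ∑ l : Fin (d+1), (S.p i (S.inv m) l : F) • S.G F x l j := by
  ext y z
  have lhs : (S.adjM F m * S.G F x i j) y z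
      = (if S.r x z = j then 1 else 0) * (S.p i (S.inv m) (S.r x y) : F) := by
    simp only [Matrix.mul_apply, G_apply, adjM, Matrix.of_apply]
    have step : ∀ w : X, (if S.r y w = m then (1:F) else 0) *
        (if S.r x w = i ∧ S.r x z = j then 1 else 0)
        = (if S.r x z = j then 1 else 0) *
          (if S.r x w = i ∧ S.r w y = S.inv m then 1 else 0) := by
      intro w
      have hw : S.r y w = m ↔ S.r w y = S.inv m := by
        constructor
        · intro h; rw [S.r_symm y w, h]
        · intro h
          have h2 := S.r_symm w y
          rw [h] at h2
          rw [h2, S.inv_invol]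
      by_cases h1 : S.r y w = m <;> by_cases h2 : S.r x w = i <;>
        by_cases h3 : S.r x z = j <;> simp_all [hw]
    rw [Finset.sum_congr rfl fun w _ => step w, ← Finset.mul_sum, Finset.sum_boole,
      S.card_p i (S.inv m) x y]
  rw [lhs]
  simp only [Matrix.sum_apply, Matrix.smul_apply, G_apply, smul_eq_mul, mul_ite, mul_one,
    mul_zero, ite_and]
  by_cases hz : S.r x z = j
  · simp only [hz, if_true]
    rw [Finset.sum_ite_eq, if_pos (Finset.mem_univ _)]
    ring
  · simp [hz]

theorem G_mul_A (m i j : Fin (d+1)) :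
    S.G F x i j * S.adjM F m = ∑ l : Fin (d+1), (S.p j m l : F) • S.G F x i l := by
  ext y z
  have lhs : (S.G F x i j * S.adjM F m) y z
      = (if S.r x y = i then 1 else 0) * (S.p j m (S.r x z) : F) := by
    simp only [Matrix.mul_apply, G_apply, adjM, Matrix.of_apply]
    have step : ∀ w : X, (if S.r x y = i ∧ S.r x w = j then (1:F) else 0) *
        (if S.r w z = m then 1 else 0)
        = (if S.r x y = i then 1 else 0) *
          (if S.r x w = j ∧ S.r w z = m then 1 else 0) := by
      intro w
      by_cases h1 : S.r x y = i <;> by_cases h2 : S.r x w = j <;>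
        by_cases h3 : S.r w z = m <;> simp [h1, h2, h3]
    rw [Finset.sum_congr rfl fun w _ => step w, ← Finset.mul_sum, Finset.sum_boole,
      S.card_p j m x z]
  rw [lhs]
  simp only [Matrix.sum_apply, Matrix.smul_apply, G_apply, smul_eq_mul, mul_ite, mul_one,
    mul_zero, ite_and]
  by_cases hy : S.r x y = i
  · simp only [hy, if_true, one_mul]
    rw [Finset.sum_ite_eq, if_pos (Finset.mem_univ _)]
  · simp [hy]

section Main

variable {F}
variable (p : ℕ) [Fact p.Prime] [CharP F p]

theorem G_mem_B1 {i j : Fin (d+1)} (h : p ∣ S.k i * S.k j) : S.G F x i j ∈ B1 F p S x :=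
  Submodule.subset_span ⟨i, j, h, rfl⟩

theorem triple_gen {h l : Fin (d+1)} (hdvd : p ∣ S.k h * S.k l) (i j u v : Fin (d+1)) :
    S.G F x i j * S.G F x h l * S.G F x u v = 0 := by
  rw [S.G_mul_G F x, smul_mul_assoc, S.G_mul_G F x, smul_smul]
  by_cases hjh : j = h
  · by_cases hlu : l = u
    · subst hjh; subst hlu
      rw [if_pos rfl, if_pos rfl, ← Nat.cast_mul, (CharP.cast_eq_zero_iff F p _).2 hdvd,
        zero_smul]
    · rw [if_neg hlu, mul_zero, zero_smul]
  · rw [if_neg hjh, zero_mul, zero_smul]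

theorem cube_zero : ∀ a ∈ B1 F p S x, ∀ b ∈ B1 F p S x, ∀ c ∈ B1 F p S x, a * b * c = 0 := by
  intro a ha b hb c hc
  induction hb using Submodule.span_induction with
  | mem b hbmem =>
    obtain ⟨h, l, hdvd, rfl⟩ := hbmem
    induction ha using Submodule.span_induction with
    | mem a hamem =>
      obtain ⟨i, j, -, rfl⟩ := hamem
      induction hc using Submodule.span_induction with
      | mem c hcmem =>
        obtain ⟨u, v, -, rfl⟩ := hcmem
        exact S.triple_gen x p hdvd i j u v
      | zero => rw [mul_zero]
      | add c1 c2 _ _ ih1 ih2 => rw [mul_add, ih1, ih2, add_zero]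
      | smul t c _ ih => rw [mul_smul_comm, ih, smul_zero]
    | zero => rw [zero_mul, zero_mul]
    | add a1 a2 _ _ ih1 ih2 => rw [add_mul, add_mul, ih1, ih2, add_zero]
    | smul t a _ ih => rw [smul_mul_assoc, smul_mul_assoc, ih, smul_zero]
  | zero => rw [mul_zero, zero_mul]
  | add b1 b2 _ _ ih1 ih2 => rw [mul_add, add_mul, ih1, ih2, add_zero]
  | smul t b _ ih => rw [mul_smul_comm, smul_mul_assoc, ih, smul_zero]

theorem kdvd_left {i j m l : Fin (d+1)} (hdvd : p ∣ S.k i * S.k j)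
    (hc : (S.p i (S.inv m) l : F) ≠ 0) : p ∣ S.k l * S.k j := by
  rcases (Nat.Prime.dvd_mul Fact.out).1 hdvd with hi | hj
  · have hnd : ¬ p ∣ S.p i (S.inv m) l := fun hd => hc ((CharP.cast_eq_zero_iff F p _).2 hd)
    have key := S.count_identity i (S.inv m) l
    have : p ∣ S.k l * S.p i (S.inv m) l := key ▸ Dvd.dvd.mul_right hi _
    rcases (Nat.Prime.dvd_mul Fact.out).1 this with h | h
    · exact Dvd.dvd.mul_right h _
    · exact absurd h hnd
  · exact Dvd.dvd.mul_left hj _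

theorem kdvd_right {i j m l : Fin (d+1)} (hdvd : p ∣ S.k i * S.k j)
    (hc : (S.p j m l : F) ≠ 0) : p ∣ S.k i * S.k l := by
  rcases (Nat.Prime.dvd_mul Fact.out).1 hdvd with hi | hj
  · exact Dvd.dvd.mul_right hi _
  · have hnd : ¬ p ∣ S.p j m l := fun hd => hc ((CharP.cast_eq_zero_iff F p _).2 hd)
    have key := S.count_identity j m l
    have : p ∣ S.k l * S.p j m l := key ▸ Dvd.dvd.mul_right hj _
    rcases (Nat.Prime.dvd_mul Fact.out).1 this with h | h
    · exact Dvd.dvd.mul_left h _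
    · exact absurd h hnd

theorem ideal_prop : ∀ Z ∈ S.terw F x, ∀ b ∈ B1 F p S x,
    Z * b ∈ B1 F p S x ∧ b * Z ∈ B1 F p S x := by
  intro Z hZ
  induction hZ using Algebra.adjoin_induction with
  | mem Z hZmem =>
    intro b hb
    induction hb using Submodule.span_induction with
    | mem b hbmem =>
      obtain ⟨i, j, hdvd, rfl⟩ := hbmem
      rcases hZmem with ⟨m, rfl⟩ | ⟨m, rfl⟩
      · constructor
        · show S.adjM F m * S.G F x i j ∈ B1 F p S x
          rw [S.A_mul_G F x]
          refine Submodule.sum_mem _ fun l _ => ?_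
          by_cases hc : (S.p i (S.inv m) l : F) = 0
          · rw [hc, zero_smul]; exact Submodule.zero_mem _
          · exact Submodule.smul_mem _ _ (S.G_mem_B1 x p (S.kdvd_left p hdvd hc))
        · show S.G F x i j * S.adjM F m ∈ B1 F p S x
          rw [S.G_mul_A F x]
          refine Submodule.sum_mem _ fun l _ => ?_
          by_cases hc : (S.p j m l : F) = 0
          · rw [hc, zero_smul]; exact Submodule.zero_mem _
          · exact Submodule.smul_mem _ _ (S.G_mem_B1 x p (S.kdvd_right p hdvd hc))
      · constructor
        · show S.dualIdem F x m * S.G F x i j ∈ B1 F p S x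
          rw [S.E_mul_G F x]
          split_ifs
          · exact S.G_mem_B1 x p hdvd
          · exact Submodule.zero_mem _
        · show S.G F x i j * S.dualIdem F x m ∈ B1 F p S x
          rw [S.G_mul_E F x]
          split_ifs
          · exact S.G_mem_B1 x p hdvd
          · exact Submodule.zero_mem _
    | zero => rw [mul_zero, zero_mul]; exact ⟨Submodule.zero_mem _, Submodule.zero_mem _⟩
    | add b1 b2 hb1 hb2 ih1 ih2 =>
      rw [mul_add, add_mul]
      exact ⟨Submodule.add_mem _ ih1.1 ih2.1, Submodule.add_mem _ ih1.2 ih2.2⟩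
    | smul t b hbmem ih =>
      rw [mul_smul_comm, smul_mul_assoc]
      exact ⟨Submodule.smul_mem _ _ ih.1, Submodule.smul_mem _ _ ih.2⟩
  | algebraMap r =>
    intro b hb
    rw [Algebra.algebraMap_eq_smul_one, smul_mul_assoc, mul_smul_comm, one_mul, mul_one]
    exact ⟨Submodule.smul_mem _ _ hb, Submodule.smul_mem _ _ hb⟩
  | add Z1 Z2 h1 h2 ih1 ih2 =>
    intro b hb
    rw [add_mul, mul_add]
    exact ⟨Submodule.add_mem _ (ih1 b hb).1 (ih2 b hb).1,
      Submodule.add_mem _ (ih1 b hb).2 (ih2 b hb).2⟩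
  | mul Z1 Z2 h1 h2 ih1 ih2 =>
    intro b hb
    rw [mul_assoc, ← mul_assoc b]
    exact ⟨(ih1 _ (ih2 b hb).1).1, (ih2 _ (ih1 b hb).2).2⟩

set_option maxHeartbeats 1000000 in
set_option synthInstance.maxHeartbeats 400000 in
theorem B1_cube_zero_and_le_radical' :
    (∀ a ∈ B1 F p S x, ∀ b ∈ B1 F p S x, ∀ c ∈ B1 F p S x, a * b * c = 0) ∧
    (∀ Z ∈ S.terw F x, ∀ b ∈ B1 F p S x, Z * b ∈ B1 F p S x ∧ b * Z ∈ B1 F p S x) ∧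
    (∀ Z : ↥(S.terw F x), (Z : Matrix X X F) ∈ B1 F p S x →
      Z ∈ (⊥ : Ideal ↥(S.terw F x)).jacobson) := by
  refine ⟨S.cube_zero x p, S.ideal_prop x p, ?_⟩
  intro Z hZB1
  show Z ∈ sInf {J : Ideal ↥(S.terw F x) | ⊥ ≤ J ∧ J.IsMaximal}
  rw [Submodule.mem_sInf]
  rintro J ⟨-, hJmax⟩
  by_contra hZJ
  have hlt : J < J ⊔ Ideal.span {Z} :=
    lt_of_le_of_ne le_sup_left
      (fun h => hZJ (h ▸ Submodule.mem_sup_right (Ideal.subset_span rfl)))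
  have htop : J ⊔ Ideal.span {Z} = ⊤ := hJmax.out.2 _ hlt
  have h1 : (1 : ↥(S.terw F x)) ∈ J ⊔ Ideal.span {Z} := htop ▸ Submodule.mem_top
  obtain ⟨j, hjJ, s, hs, hjs⟩ := Submodule.mem_sup.1 h1
  obtain ⟨t, rfl⟩ := Submodule.mem_span_singleton.1 hs
  set u : ↥(S.terw F x) := t • Z with hu
  have humem : (u : Matrix X X F) ∈ B1 F p S x := by
    have : (u : Matrix X X F) = (t : Matrix X X F) * (Z : Matrix X X F) := rfl
    rw [this]
    exact (S.ideal_prop x p t t.2 _ hZB1).1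
  have hcube : u * u * u = 0 :=
    Subtype.ext (S.cube_zero x p _ humem _ humem _ humem)
  have hunit : IsUnit (1 - u) := by
    refine isUnit_iff_exists.2 ⟨1 + u + u * u, ?_, ?_⟩
    · have e : (1 - u) * (1 + u + u * u) = 1 - u * u * u := by
        rw [sub_mul, one_mul, mul_add, mul_add, mul_one, ← mul_assoc]
        abel
      rw [e, hcube, sub_zero]
    · have e : (1 + u + u * u) * (1 - u) = 1 - u * u * u := by
        rw [mul_sub, mul_one, add_mul, add_mul, one_mul, mul_assoc]
        abel
      rw [e, hcube, sub_zero]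
  have hj : j = 1 - u := eq_sub_of_add_eq hjs
  exact hJmax.out.1 (Ideal.eq_top_of_isUnit_mem J hjJ (hj ▸ hunit))

end Main

theorem B1_cube_zero_and_le_radical (p : ℕ) [Fact p.Prime] [CharP F p]
    (S : AssocScheme X d) (x : X) :
    (∀ a ∈ B1 F p S x, ∀ b ∈ B1 F p S x, ∀ c ∈ B1 F p S x, a * b * c = 0) ∧
    (∀ Z ∈ S.terw F x, ∀ b ∈ B1 F p S x, Z * b ∈ B1 F p S x ∧ b * Z ∈ B1 F p S x) ∧
    (∀ Z : ↥(S.terw F x), (Z : Matrix X X F) ∈ B1 F p S x →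
      Z ∈ (⊥ : Ideal ↥(S.terw F x)).jacobson) :=
  S.B1_cube_zero_and_le_radical' x p

end AssocScheme
end
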